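/- Let a < b be real numbers and q : [a,b] → ℝ. Let φ : ℂ × [a,b] → ℂ satisfy: (1) for each z ∈ ℂ, x ↦ φ(z,x) is twice differentiable with ∂²_xφ(z,x) = (q(x) − z)·φ(z,x); (2) φ(z̄, x) = conj(φ(z,x)) and ∂_xφ(z̄, x) = conj(∂_xφ(z,x)) for all z ∈ ℂ, x ∈ [a,b] (where z̄ is the complex conjugate of z); (3) the boundary values φ(z,a) and ∂_xφ(z,a) do not depend on z. Let c, s : [a,b] → ℝ be differentiable with c(b)s'(b) − c'(b)s(b) = 1, and define E(z) := (c(b)·∂_xφ(z,b) − c'(b)·φ(z,b)) + i·(s(b)·∂_xφ(z,b) − s'(b)·φ(z,b)). Then for all w, z ∈ ℂ with w̄ ≠ z: (E(z)·conj(E(w)) − E(w̄)·conj(E(z̄))) / (2i·(w̄ − z)) = ∫_a^b conj(φ(w,x))·φ(z,x) dx. -/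

import Mathlib

/-!
The Wronskian `W = f g' - f' g` of solutions of `f'' = (q - μ) f` and `g'' = (q - ν) g` satisfies the
Lagrange identity `W' = (μ - ν) f g`. Taking `f = φ(w̄)`, `g = φ(z)`, the Wronskian vanishes at `a`
because the two solutions share their initial data, so `(w̄ - z) ∫_a^b φ(w̄) φ(z) = W(b)`, and
`φ(w̄) = conj φ(w)` turns the integrand into `conj φ(w) φ(z)`. On the other side, `E` is built from
`φ(z,b), φ'(z,b)` through the real unimodular matrix with rows `(c(b), c'(b))`, `(s(b), s'(b))`,
and such a change of basis preserves Wronskians: `E(z) conj E(w) − E(w̄) conj E(z̄) = 2i W(b)`.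
-/

open Complex ComplexConjugate

def wronskian (f f' g g' : ℝ → ℂ) (x : ℝ) : ℂ := f x * g' x - f' x * g x

theorem hasDerivAt_wronskian {f f' g g' q : ℝ → ℂ} {μ ν : ℂ} {x : ℝ}
    (hf : HasDerivAt f (f' x) x) (hf' : HasDerivAt f' ((q x - μ) * f x) x)
    (hg : HasDerivAt g (g' x) x) (hg' : HasDerivAt g' ((q x - ν) * g x) x) :
    HasDerivAt (wronskian f f' g g') ((μ - ν) * (f x * g x)) x := by
  exact ((hf.mul hg').sub (hf'.mul hg)).congr_deriv (by ring)

theorem sub_mul_integral_mul_eq_wronskian_sub {f f' g g' q : ℝ → ℂ} {μ ν : ℂ} {a b : ℝ}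
    (hab : a ≤ b)
    (hf : ∀ x ∈ Set.Icc a b, HasDerivAt f (f' x) x)
    (hf' : ∀ x ∈ Set.Icc a b, HasDerivAt f' ((q x - μ) * f x) x)
    (hg : ∀ x ∈ Set.Icc a b, HasDerivAt g (g' x) x)
    (hg' : ∀ x ∈ Set.Icc a b, HasDerivAt g' ((q x - ν) * g x) x) :
    (μ - ν) * ∫ x in a..b, f x * g x = wronskian f f' g g' b - wronskian f f' g g' a := by
  rw [← intervalIntegral.integral_const_mul]
  refine intervalIntegral.integral_eq_sub_of_hasDerivAt (fun x hx => ?_) ?_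
  · rw [Set.uIcc_of_le hab] at hx
    exact hasDerivAt_wronskian (hf x hx) (hf' x hx) (hg x hx) (hg' x hx)
  · refine ContinuousOn.intervalIntegrable fun x hx => ?_
    rw [Set.uIcc_of_le hab] at hx
    exact (continuousAt_const.mul
      ((hf x hx).continuousAt.mul (hg x hx).continuousAt)).continuousWithinAt

/-- `E` evaluated on boundary data `(p, p') = (φ(b), φ'(b))`, with `c, c', s, s'` the values at `b`. -/
def deBrangesE (c c' s s' : ℝ) (p p' : ℂ) : ℂ :=
  (c * p' - c' * p) + I * (s * p' - s' * p)

theorem deBrangesE_mul_conj_sub {c c' s s' : ℝ} (h : c * s' - c' * s = 1) (p p' r r' : ℂ) :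
    deBrangesE c c' s s' p p' * conj (deBrangesE c c' s s' r r') -
        deBrangesE c c' s s' (conj r) (conj r') * conj (deBrangesE c c' s s' (conj p) (conj p')) =
      2 * I * (conj r * p' - conj r' * p) := by
  have hC : (c : ℂ) * s' - c' * s = 1 := by exact_mod_cast h
  simp only [deBrangesE, map_add, map_sub, map_mul, conj_ofReal, conj_I, conj_conj]
  linear_combination (2 * I * (conj r * p' - conj r' * p)) * hC

theorem de_branges_kernel_identity_general
    (a b : ℝ) (hab : a < b) (q : ℝ → ℝ)
    (φ φx : ℂ → ℝ → ℂ)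
    (hφode : ∀ z : ℂ, ∀ x ∈ Set.Icc a b, HasDerivAt (fun t => φ z t) (φx z x) x)
    (hφode' : ∀ z : ℂ, ∀ x ∈ Set.Icc a b,
      HasDerivAt (fun t => φx z t) (((q x : ℂ) - z) * φ z x) x)
    (hconj : ∀ z : ℂ, ∀ x ∈ Set.Icc a b,
      φ (starRingEnd ℂ z) x = starRingEnd ℂ (φ z x) ∧
      φx (starRingEnd ℂ z) x = starRingEnd ℂ (φx z x))
    (hinit : ∀ z w : ℂ, φ z a = φ w a ∧ φx z a = φx w a)
    (c s : ℝ → ℝ)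
    (hcs : c b * deriv s b - deriv c b * s b = 1)
    (E : ℂ → ℂ)
    (hE : ∀ z : ℂ, E z = ((Complex.ofReal (c b)) * φx z b - (Complex.ofReal (deriv c b)) * φ z b) +
      Complex.I * ((Complex.ofReal (s b)) * φx z b - (Complex.ofReal (deriv s b)) * φ z b)) :
    ∀ w z : ℂ, starRingEnd ℂ w ≠ z →
      (E z * starRingEnd ℂ (E w) -
          E (starRingEnd ℂ w) * starRingEnd ℂ (E (starRingEnd ℂ z))) /
        (2 * Complex.I * (starRingEnd ℂ w - z)) =
      ∫ x in a..b, starRingEnd ℂ (φ w x) * φ z x := by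
  intro w z hwz
  have hb : b ∈ Set.Icc a b := ⟨hab.le, le_rfl⟩
  have hE' : ∀ ζ, E ζ = deBrangesE (c b) (deriv c b) (s b) (deriv s b) (φ ζ b) (φx ζ b) := hE
  have hnum : E z * conj (E w) - E (conj w) * conj (E (conj z)) =
      2 * I * (conj (φ w b) * φx z b - conj (φx w b) * φ z b) := by
    rw [hE', hE', hE', hE', (hconj w b hb).1, (hconj w b hb).2, (hconj z b hb).1,
      (hconj z b hb).2, deBrangesE_mul_conj_sub hcs]
  have hgreen : (conj w - z) * ∫ x in a..b, conj (φ w x) * φ z x =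
      conj (φ w b) * φx z b - conj (φx w b) * φ z b := by
    have hWa : wronskian (φ (conj w)) (φx (conj w)) (φ z) (φx z) a = 0 := by
      simp only [wronskian, (hinit (conj w) z).1, (hinit (conj w) z).2]
      ring
    have hW := sub_mul_integral_mul_eq_wronskian_sub hab.le (hφode (conj w)) (hφode' (conj w))
      (hφode z) (hφode' z)
    rw [hWa, sub_zero, wronskian, (hconj w b hb).1, (hconj w b hb).2] at hW
    rw [← hW, intervalIntegral.integral_congr fun x hx => ?_]
    rw [Set.uIcc_of_le hab.le] at hx
    simp only [(hconj w x hx).1]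
  rw [div_eq_iff (mul_ne_zero (mul_ne_zero two_ne_zero I_ne_zero) (sub_ne_zero.mpr hwz)), hnum,
    ← hgreen]
  ring

/-- Regular-interval reproducing-kernel identity for the de Branges function
`E(z) = W_b(c,φ(z)) + i W_b(s,φ(z))` (with `W_b(u,v) := u(b) v'(b) − u'(b) v(b)`):
for a family `φ(z,·)` of solutions of `−f'' + q f = z f` with conjugation symmetry
and `z`-independent initial data at `a`, one has
`(E(z) conj(E(w)) − E(w̄) conj(E(z̄))) / (2i (w̄ − z)) = ∫_a^b conj(φ(w,x)) φ(z,x) dx`. -/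
theorem de_branges_kernel_identity
    (a b : ℝ) (hab : a < b) (q : ℝ → ℝ)
    (φ φx : ℂ → ℝ → ℂ)
    (hφode : ∀ z : ℂ, ∀ x ∈ Set.Icc a b, HasDerivAt (fun t => φ z t) (φx z x) x)
    (hφode' : ∀ z : ℂ, ∀ x ∈ Set.Icc a b,
      HasDerivAt (fun t => φx z t) (((q x : ℂ) - z) * φ z x) x)
    (hconj : ∀ z : ℂ, ∀ x ∈ Set.Icc a b,
      φ (starRingEnd ℂ z) x = starRingEnd ℂ (φ z x) ∧
      φx (starRingEnd ℂ z) x = starRingEnd ℂ (φx z x))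
    (hinit : ∀ z w : ℂ, φ z a = φ w a ∧ φx z a = φx w a)
    (c s : ℝ → ℝ)
    (hc : ∀ x ∈ Set.Icc a b, DifferentiableAt ℝ c x)
    (hs : ∀ x ∈ Set.Icc a b, DifferentiableAt ℝ s x)
    (hcs : c b * deriv s b - deriv c b * s b = 1)
    (E : ℂ → ℂ)
    (hE : ∀ z : ℂ, E z = ((Complex.ofReal (c b)) * φx z b - (Complex.ofReal (deriv c b)) * φ z b) +
      Complex.I * ((Complex.ofReal (s b)) * φx z b - (Complex.ofReal (deriv s b)) * φ z b)) :
    ∀ w z : ℂ, starRingEnd ℂ w ≠ z →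
      (E z * starRingEnd ℂ (E w) -
          E (starRingEnd ℂ w) * starRingEnd ℂ (E (starRingEnd ℂ z))) /
        (2 * Complex.I * (starRingEnd ℂ w - z)) =
      ∫ x in a..b, starRingEnd ℂ (φ w x) * φ z x :=
  de_branges_kernel_identity_general a b hab q φ φx hφode hφode' hconj hinit c s hcs E hE
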